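/- arXiv:1405.2765 — 2 statements merged into one kernel-verified Lean document; each statement's English description precedes it below -/
import Mathlib

section
/- There exist universal constants c1,c2∈(0,∞) such that for every finite connected weighted graph G with at least two vertices, every x∈V(G) and every λ≥4, one has μ^G_x·r(G)·P^G_x( τ⁺_x ≥ λ·m(G)·r(G) ) ≤ c1·e^{−c2·λ}, where τ⁺_x=inf{t≥1: X^G_t=x} is the first return time to x. -/
open MeasureTheory Classical

/-- A finite weighted graph: a symmetric nonnegative weight function on pairs of vertices,
positive exactly on edges, with no self-loops, such that the resulting graph is connected. -/
structure FinWeightedGraph (V : Type) [Fintype V] : Type where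
  w : V → V → ℝ
  symm : ∀ x y, w x y = w y x
  nonneg : ∀ x y, 0 ≤ w x y
  loopless : ∀ x, w x x = 0
  connected : ∀ x y : V, Relation.ReflTransGen (fun a b => 0 < w a b) x y

namespace FinWeightedGraph

variable {V : Type} [Fintype V] (G : FinWeightedGraph V)

/-- The weight `μ^G_x` of a vertex. -/
noncomputable def deg (x : V) : ℝ := ∑ y, G.w x y

/-- The total mass `m(G) = μ^G(V(G))`. -/
noncomputable def mass : ℝ := ∑ x, G.deg x

/-- The measure `μ^G(A)` of a set of vertices. -/
noncomputable def vol (A : Set V) : ℝ := ∑ x, A.indicator G.deg x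

/-- The Dirichlet form `E_G(f,f)`. -/
noncomputable def dirichlet (f : V → ℝ) : ℝ :=
  (1 / 2) * ∑ x, ∑ y, G.w x y * (f x - f y) ^ 2

/-- The effective resistance `R_G(x,y)`. -/
noncomputable def res (x y : V) : ℝ :=
  if x = y then 0
  else (sInf {e : ℝ | ∃ f : V → ℝ, f x = 0 ∧ f y = 1 ∧ G.dirichlet f = e})⁻¹

/-- The resistance diameter `r(G)`. -/
noncomputable def resDiam : ℝ := ⨆ x : V, ⨆ y : V, G.res x y

/-- `r₀(G)`, the minimal resistance between distinct vertices. -/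
noncomputable def minRes : ℝ := sInf {e : ℝ | ∃ x y : V, x ≠ y ∧ G.res x y = e}

/-- The open ball in the resistance metric. -/
def resBall (x : V) (r : ℝ) : Set V := {y | G.res x y < r}

/-- The local time `L^G_t(x)` of a trajectory `ω` at vertex `x` and integer time `t`. -/
noncomputable def localTime [DecidableEq V] (ω : ℕ → V) (t : ℕ) (x : V) : ℝ :=
  (G.deg x)⁻¹ * ∑ i ∈ Finset.range t, (if ω i = x then (1 : ℝ) else 0)

/-- `P` is the law of the discrete-time random walk on `G` started from `z`:
a probability measure on trajectories whose cylinder probabilities are given by the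
products of the transition probabilities `μ^G_{xy}/μ^G_x`. -/
def IsWalkLaw [MeasurableSpace V] (z : V) (P : Measure (ℕ → V)) : Prop :=
  IsProbabilityMeasure P ∧
  ∀ (n : ℕ) (path : ℕ → V),
    P {ω | ∀ k ≤ n, ω k = path k} =
      (if path 0 = z then 1 else 0) *
        ∏ k ∈ Finset.range n, ENNReal.ofReal (G.w (path k) (path (k + 1)) / G.deg (path k))

end FinWeightedGraph

/-!
Write `M = m(G) r(G) ≥ 1` and `b = ⌈2M⌉`. The truncated hitting time `h(z) = E_z[min(τ_x, N)]`
vanishes at `x` and has Laplacian at most `μ_z` elsewhere, so its energy is at most `m(G) max h`,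
while `(max h)² ≤ r(G) E(h, h)`; hence `h ≤ M`. So from every `z ≠ x` the walk avoids `x` for `b`
steps with probability at most `1/2`, and the Markov property gives
`P_x(τ⁺_x > jb) ≤ 2^{1-j} P_x(τ⁺_x > b)`. Kac's lemma bounds `μ_x P_x(τ⁺_x > b)` by
`m(G)/b ≤ 1/(2 r(G))`. With `j = ⌊λ/3⌋` one has `jb < λM`, and
`μ_x r(G) P_x(τ⁺_x ≥ λM) ≤ 2^{-j} ≤ 2 e^{-λ log 2 / 3}`.
-/

namespace FinWeightedGraph

variable {V : Type} [Fintype V] (G : FinWeightedGraph V)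

noncomputable def laplacian (f : V → ℝ) (z : V) : ℝ := G.deg z * f z - ∑ w, G.w z w * f w

noncomputable def conductance (x y : V) : ℝ :=
  sInf {e : ℝ | ∃ f : V → ℝ, f x = 0 ∧ f y = 1 ∧ G.dirichlet f = e}

lemma deg_nonneg (z : V) : 0 ≤ G.deg z :=
  Finset.sum_nonneg fun y _ => G.nonneg z y

lemma deg_le_mass (z : V) : G.deg z ≤ G.mass :=
  Finset.single_le_sum (fun y _ => G.deg_nonneg y) (Finset.mem_univ z)

lemma deg_pos [Nontrivial V] (z : V) : 0 < G.deg z := by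
  obtain ⟨y, hy⟩ := exists_ne z
  rcases (G.connected z y).cases_head with rfl | ⟨a, hza, -⟩
  · exact absurd rfl hy
  · exact hza.trans_le (Finset.single_le_sum (fun b _ => G.nonneg z b) (Finset.mem_univ a))

lemma dirichlet_nonneg (f : V → ℝ) : 0 ≤ G.dirichlet f :=
  mul_nonneg (by norm_num) <| Finset.sum_nonneg fun x _ => Finset.sum_nonneg fun y _ =>
    mul_nonneg (G.nonneg x y) (sq_nonneg _)

lemma weight_mul_sq_le_two_mul_dirichlet (f : V → ℝ) (a b : V) :
    G.w a b * (f a - f b) ^ 2 ≤ 2 * G.dirichlet f := by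
  have hterm : ∀ x y, 0 ≤ G.w x y * (f x - f y) ^ 2 := fun x y =>
    mul_nonneg (G.nonneg x y) (sq_nonneg _)
  have hrow : G.w a b * (f a - f b) ^ 2 ≤ ∑ y, G.w a y * (f a - f y) ^ 2 :=
    Finset.single_le_sum (fun y _ => hterm a y) (Finset.mem_univ b)
  have hall : ∑ y, G.w a y * (f a - f y) ^ 2 ≤ ∑ x, ∑ y, G.w x y * (f x - f y) ^ 2 :=
    Finset.single_le_sum (f := fun x => ∑ y, G.w x y * (f x - f y) ^ 2)
      (fun x _ => Finset.sum_nonneg fun y _ => hterm x y) (Finset.mem_univ a)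
  rw [dirichlet]
  linarith

lemma dirichlet_const_mul (c : ℝ) (f : V → ℝ) :
    G.dirichlet (fun z => c * f z) = c ^ 2 * G.dirichlet f := by
  simp only [dirichlet, Finset.mul_sum]
  refine Finset.sum_congr rfl fun x _ => Finset.sum_congr rfl fun y _ => ?_
  ring

lemma dirichlet_eq_sum_mul_laplacian (f : V → ℝ) :
    G.dirichlet f = ∑ z, f z * G.laplacian f z := by
  have hrow : ∑ x, ∑ y, G.w x y * f x ^ 2 = ∑ x, G.deg x * f x ^ 2 := by
    simp only [deg, Finset.sum_mul]
  have hcol : ∑ x, ∑ y, G.w x y * f y ^ 2 = ∑ x, G.deg x * f x ^ 2 := by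
    rw [Finset.sum_comm, ← hrow]
    simp only [G.symm]
  have hsplit : ∀ x y, G.w x y * (f x - f y) ^ 2 =
      G.w x y * f x ^ 2 + G.w x y * f y ^ 2 - 2 * (f x * (G.w x y * f y)) := fun x y => by ring
  have hlap : ∀ z, f z * G.laplacian f z = G.deg z * f z ^ 2 - ∑ w, f z * (G.w z w * f w) :=
    fun z => by rw [laplacian, ← Finset.mul_sum]; ring
  simp only [dirichlet, hsplit, hlap, Finset.sum_add_distrib, Finset.sum_sub_distrib,
    ← Finset.mul_sum, hrow, hcol]
  ring

lemma res_eq_inv_conductance {x y : V} (h : x ≠ y) : G.res x y = (G.conductance x y)⁻¹ :=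
  if_neg h

lemma conductance_le_dirichlet {x y : V} {f : V → ℝ} (hx : f x = 0) (hy : f y = 1) :
    G.conductance x y ≤ G.dirichlet f :=
  csInf_le ⟨0, by rintro _ ⟨g, -, -, rfl⟩; exact G.dirichlet_nonneg g⟩ ⟨f, hx, hy, rfl⟩

lemma dirichlet_indicator (y : V) : G.dirichlet (fun z => if z = y then 1 else 0) = G.deg y := by
  simp [dirichlet_eq_sum_mul_laplacian, laplacian, G.loopless]

lemma exists_sq_sub_le_mul_dirichlet (x y : V) :
    ∃ C, ∀ f : V → ℝ, (f y - f x) ^ 2 ≤ C * G.dirichlet f := by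
  induction G.connected x y with
  | refl => exact ⟨0, fun f => by simp⟩
  | @tail b c _ hbc ih =>
    obtain ⟨C, hC⟩ := ih
    refine ⟨2 * C + 4 * (G.w b c)⁻¹, fun f => ?_⟩
    have hedge : (f c - f b) ^ 2 ≤ 2 * (G.w b c)⁻¹ * G.dirichlet f := by
      rw [mul_comm 2, mul_assoc, le_inv_mul_iff₀ hbc, ← neg_sub, neg_sq]
      exact G.weight_mul_sq_le_two_mul_dirichlet f b c
    nlinarith [hC f, sq_nonneg (f c - 2 * f b + f x)]

lemma conductance_pos {x y : V} (h : x ≠ y) : 0 < G.conductance x y := by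
  obtain ⟨C, hC⟩ := G.exists_sq_sub_le_mul_dirichlet x y
  have hadm : ∀ f : V → ℝ, f x = 0 → f y = 1 → 1 ≤ C * G.dirichlet f := fun f hx hy => by
    simpa [hx, hy] using hC f
  have hC₀ : 0 < C := by
    have h₁ := hadm (fun z => if z = y then 1 else 0) (if_neg h) (if_pos rfl)
    nlinarith [G.dirichlet_nonneg (fun z => if z = y then 1 else 0)]
  refine (inv_pos.mpr hC₀).trans_le
    (le_csInf ⟨_, fun z => if z = y then 1 else 0, if_neg h, if_pos rfl, rfl⟩ ?_)
  rintro _ ⟨f, hx, hy, rfl⟩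
  exact (inv_le_iff_one_le_mul₀' hC₀).mpr (hadm f hx hy)

lemma sq_le_res_mul_dirichlet {x z : V} {f : V → ℝ} (hx : f x = 0) :
    f z ^ 2 ≤ G.res x z * G.dirichlet f := by
  rcases eq_or_ne x z with rfl | h
  · simp [res, hx]
  rw [res_eq_inv_conductance G h, inv_mul_eq_div, le_div_iff₀ (G.conductance_pos h)]
  rcases eq_or_ne (f z) 0 with hz | hz
  · simpa [hz] using G.dirichlet_nonneg f
  have hscaled := G.conductance_le_dirichlet (x := x) (y := z) (f := fun v => (f z)⁻¹ * f v)
    (by simp [hx]) (by simp [hz])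
  rw [dirichlet_const_mul, inv_pow, inv_mul_eq_div, le_div_iff₀ (by positivity)] at hscaled
  linarith

lemma res_le_resDiam (x y : V) : G.res x y ≤ G.resDiam :=
  le_ciSup_of_le (Set.finite_range _).bddAbove x <|
    le_ciSup (Set.finite_range _).bddAbove y

lemma inv_deg_le_res {x y : V} (h : x ≠ y) : (G.deg y)⁻¹ ≤ G.res x y := by
  rw [res_eq_inv_conductance G h]
  refine inv_anti₀ (G.conductance_pos h) ?_
  simpa only [dirichlet_indicator] using
    G.conductance_le_dirichlet (f := fun z => if z = y then 1 else 0) (if_neg h) (if_pos rfl)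

section Nontrivial

variable [Nontrivial V]

lemma resDiam_pos : 0 < G.resDiam := by
  obtain ⟨x, y, h⟩ := exists_pair_ne V
  exact (inv_pos.mpr (G.deg_pos y)).trans_le ((G.inv_deg_le_res h).trans (G.res_le_resDiam x y))

lemma one_le_mass_mul_resDiam : 1 ≤ G.mass * G.resDiam := by
  obtain ⟨x, y, h⟩ := exists_pair_ne V
  calc (1 : ℝ) = G.deg y * (G.deg y)⁻¹ := (mul_inv_cancel₀ (G.deg_pos y).ne').symm
    _ ≤ G.mass * G.resDiam :=
      mul_le_mul (G.deg_le_mass y) ((G.inv_deg_le_res h).trans (G.res_le_resDiam x y))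
        (inv_nonneg.mpr (G.deg_nonneg y)) ((G.deg_nonneg y).trans (G.deg_le_mass y))

end Nontrivial

noncomputable def transProb (z w : V) : ℝ := G.w z w / G.deg z

/-- `avoidProb x n z = P_z(X_1 ≠ x, …, X_n ≠ x)`, computed by first-step analysis. -/
noncomputable def avoidProb (x : V) : ℕ → V → ℝ
  | 0, _ => 1
  | n + 1, z => ∑ w ∈ Finset.univ.erase x, G.transProb z w * avoidProb x n w

/-- `E_z[min(τ_x, N)]` for the hitting time `τ_x = inf{t ≥ 0 : X_t = x}`. -/
noncomputable def truncHittingTime (x : V) (N : ℕ) (z : V) : ℝ :=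
  if z = x then 0 else ∑ n ∈ Finset.range N, G.avoidProb x n z

section Survival

variable {G} {x : V}

lemma transProb_nonneg (z w : V) : 0 ≤ G.transProb z w :=
  div_nonneg (G.nonneg z w) (G.deg_nonneg z)

@[simp]
lemma avoidProb_zero (z : V) : G.avoidProb x 0 z = 1 := rfl

lemma avoidProb_succ (n : ℕ) (z : V) :
    G.avoidProb x (n + 1) z = ∑ w ∈ Finset.univ.erase x, G.transProb z w * G.avoidProb x n w :=
  rfl

lemma avoidProb_nonneg (n : ℕ) (z : V) : 0 ≤ G.avoidProb x n z := by
  induction n generalizing z with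
  | zero => exact zero_le_one
  | succ n ih =>
    exact Finset.sum_nonneg fun w _ => mul_nonneg (transProb_nonneg z w) (ih w)

lemma avoidProb_add_succ_le {n b : ℕ} {B : ℝ}
    (h : ∀ w ≠ x, G.avoidProb x (n + b) w ≤ B * G.avoidProb x n w) (z : V) :
    G.avoidProb x (n + b + 1) z ≤ B * G.avoidProb x (n + 1) z := by
  rw [avoidProb_succ, avoidProb_succ, Finset.mul_sum]
  refine Finset.sum_le_sum fun w hw => ?_
  calc G.transProb z w * G.avoidProb x (n + b) w
      ≤ G.transProb z w * (B * G.avoidProb x n w) :=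
        mul_le_mul_of_nonneg_left (h w (Finset.ne_of_mem_erase hw)) (transProb_nonneg z w)
    _ = B * (G.transProb z w * G.avoidProb x n w) := by ring

/-- Markov property at time `n + 1`: a walk that has avoided `x` so far sits off `x`, from where
it avoids `x` for `b` more steps with probability at most `B`. -/
lemma avoidProb_add_le {b : ℕ} {B : ℝ} (hB : ∀ w ≠ x, G.avoidProb x b w ≤ B) (n : ℕ) (z : V) :
    G.avoidProb x (n + b + 1) z ≤ B * G.avoidProb x (n + 1) z := by
  induction n generalizing z with
  | zero => exact avoidProb_add_succ_le (fun w hw => by simpa using hB w hw) z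
  | succ n ih => exact avoidProb_add_succ_le (fun w _ => by rw [Nat.add_right_comm]; exact ih w) z

lemma avoidProb_add_mul_le {a b : ℕ} {B : ℝ} (ha : a ≠ 0) (hB₀ : 0 ≤ B)
    (hB : ∀ w ≠ x, G.avoidProb x b w ≤ B) (k : ℕ) (z : V) :
    G.avoidProb x (a + k * b) z ≤ B ^ k * G.avoidProb x a z := by
  induction k with
  | zero => simp
  | succ k ih =>
    obtain ⟨m, hm⟩ : ∃ m, a + k * b = m + 1 := ⟨a + k * b - 1, by omega⟩
    calc G.avoidProb x (a + (k + 1) * b) z = G.avoidProb x (m + b + 1) z := by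
          rw [← Nat.add_right_comm, ← hm]; ring_nf
      _ ≤ B * G.avoidProb x (a + k * b) z := hm ▸ avoidProb_add_le hB m z
      _ ≤ B * (B ^ k * G.avoidProb x a z) := mul_le_mul_of_nonneg_left ih hB₀
      _ = B ^ (k + 1) * G.avoidProb x a z := by ring

variable [Nontrivial V]

lemma deg_mul_avoidProb_succ (n : ℕ) (z : V) :
    G.deg z * G.avoidProb x (n + 1) z =
      ∑ w ∈ Finset.univ.erase x, G.w z w * G.avoidProb x n w := by
  rw [avoidProb_succ, Finset.mul_sum]
  refine Finset.sum_congr rfl fun w _ => ?_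
  rw [transProb, ← mul_assoc, mul_div_cancel₀ _ (G.deg_pos z).ne']

lemma avoidProb_succ_le (n : ℕ) (z : V) : G.avoidProb x (n + 1) z ≤ G.avoidProb x n z := by
  induction n generalizing z with
  | zero =>
    calc G.avoidProb x 1 z = ∑ w ∈ Finset.univ.erase x, G.transProb z w := by
          simp [avoidProb_succ]
      _ ≤ ∑ w, G.transProb z w :=
        Finset.sum_le_sum_of_subset_of_nonneg (Finset.erase_subset _ _)
          fun w _ _ => transProb_nonneg z w
      _ = 1 := by simp only [transProb]; rw [← Finset.sum_div, ← deg, div_self (G.deg_pos z).ne']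
  | succ n ih =>
    rw [avoidProb_succ, avoidProb_succ]
    exact Finset.sum_le_sum fun w _ => mul_le_mul_of_nonneg_left (ih w) (transProb_nonneg z w)

lemma avoidProb_antitone (z : V) : Antitone fun n => G.avoidProb x n z :=
  antitone_nat_of_succ_le fun n => avoidProb_succ_le n z

/-- Reversibility `μ_{wv} = μ_{vw}` makes the first-step recursion telescope. -/
lemma sum_deg_mul_avoidProb_succ (n : ℕ) :
    ∑ w ∈ Finset.univ.erase x, G.deg w * G.avoidProb x (n + 1) w =
      ∑ w ∈ Finset.univ.erase x, G.deg w * G.avoidProb x n w -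
        G.deg x * G.avoidProb x (n + 1) x := by
  have hcol : ∀ v, ∑ w ∈ Finset.univ.erase x, G.w w v = G.deg v - G.w x v := fun v => by
    rw [Finset.sum_erase_eq_sub (Finset.mem_univ x), deg, G.symm x v]
    simp only [G.symm _ v]
  simp only [deg_mul_avoidProb_succ, Finset.sum_comm (s := Finset.univ.erase x),
    ← Finset.sum_mul, hcol, sub_mul, Finset.sum_sub_distrib]

lemma deg_mul_sum_avoidProb_le_mass (K : ℕ) :
    G.deg x * ∑ n ∈ Finset.range K, G.avoidProb x (n + 1) x ≤ G.mass := by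
  set g : ℕ → ℝ := fun n => ∑ w ∈ Finset.univ.erase x, G.deg w * G.avoidProb x n w
  have hg₀ : g 0 ≤ G.mass :=
    calc g 0 = ∑ w ∈ Finset.univ.erase x, G.deg w := by simp [g]
      _ ≤ G.mass := Finset.sum_le_sum_of_subset_of_nonneg (Finset.erase_subset x Finset.univ)
        fun w _ _ => G.deg_nonneg w
  have hgK : 0 ≤ g K :=
    Finset.sum_nonneg fun w _ => mul_nonneg (G.deg_nonneg w) (avoidProb_nonneg K w)
  have htel : G.deg x * ∑ n ∈ Finset.range K, G.avoidProb x (n + 1) x = g 0 - g K := by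
    rw [Finset.mul_sum, ← Finset.sum_range_sub']
    exact Finset.sum_congr rfl fun n _ => by simp only [g, sum_deg_mul_avoidProb_succ]; ring
  linarith

/-- Kac's lemma `μ_x E_x[τ⁺_x] = m(G)`, truncated at time `K`. -/
lemma nat_mul_deg_mul_avoidProb_le_mass (K : ℕ) :
    K * (G.deg x * G.avoidProb x K x) ≤ G.mass := by
  calc K * (G.deg x * G.avoidProb x K x)
      = G.deg x * ∑ _n ∈ Finset.range K, G.avoidProb x K x := by
        rw [Finset.sum_const, Finset.card_range, nsmul_eq_mul]; ring
    _ ≤ G.deg x * ∑ n ∈ Finset.range K, G.avoidProb x (n + 1) x := by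
      gcongr with n hn
      · exact G.deg_nonneg x
      · exact avoidProb_antitone x (Finset.mem_range.mp hn)
    _ ≤ G.mass := deg_mul_sum_avoidProb_le_mass K

end Survival

section Green

variable {G} {x : V}

lemma truncHittingTime_nonneg (N : ℕ) (z : V) : 0 ≤ G.truncHittingTime x N z := by
  unfold truncHittingTime
  split_ifs
  exacts [le_rfl, Finset.sum_nonneg fun n _ => avoidProb_nonneg n z]

variable [Nontrivial V]

lemma laplacian_truncHittingTime (N : ℕ) {z : V} (hz : z ≠ x) :
    G.laplacian (G.truncHittingTime x N) z = G.deg z * (1 - G.avoidProb x N z) := by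
  have hshift : ∑ n ∈ Finset.range N, G.avoidProb x (n + 1) z =
      ∑ n ∈ Finset.range N, G.avoidProb x n z - 1 + G.avoidProb x N z := by
    have h₁ := Finset.sum_range_succ (fun n => G.avoidProb x n z) N
    have h₂ := Finset.sum_range_succ' (fun n => G.avoidProb x n z) N
    rw [avoidProb_zero] at h₂
    linarith
  have hflow : ∑ w, G.w z w * G.truncHittingTime x N w =
      G.deg z * ∑ n ∈ Finset.range N, G.avoidProb x (n + 1) z := by
    simp only [truncHittingTime, mul_ite, mul_zero, Finset.sum_ite, Finset.sum_const_zero,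
      zero_add, Finset.filter_ne', Finset.mul_sum, deg_mul_avoidProb_succ]
    exact Finset.sum_comm
  rw [laplacian, hflow, hshift, truncHittingTime, if_neg hz]
  ring

lemma dirichlet_truncHittingTime_le (N : ℕ) :
    G.dirichlet (G.truncHittingTime x N) ≤ ∑ z, G.deg z * G.truncHittingTime x N z := by
  rw [dirichlet_eq_sum_mul_laplacian]
  refine Finset.sum_le_sum fun z _ => ?_
  rcases eq_or_ne z x with rfl | hz
  · simp [truncHittingTime]
  rw [laplacian_truncHittingTime N hz]
  have hprod : 0 ≤ G.deg z * G.truncHittingTime x N z * G.avoidProb x N z :=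
    mul_nonneg (mul_nonneg (G.deg_nonneg z) (truncHittingTime_nonneg N z)) (avoidProb_nonneg N z)
  nlinarith

lemma truncHittingTime_le (N : ℕ) (z : V) : G.truncHittingTime x N z ≤ G.mass * G.resDiam := by
  obtain ⟨z₀, -, hmax⟩ :=
    Finset.exists_max_image Finset.univ (G.truncHittingTime x N) Finset.univ_nonempty
  set H := G.truncHittingTime x N z₀
  have hH : 0 ≤ H := truncHittingTime_nonneg N z₀
  have hdir : G.dirichlet (G.truncHittingTime x N) ≤ G.mass * H :=
    calc _ ≤ ∑ z, G.deg z * G.truncHittingTime x N z := dirichlet_truncHittingTime_le N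
      _ ≤ ∑ z, G.deg z * H := Finset.sum_le_sum fun z _ =>
          mul_le_mul_of_nonneg_left (hmax z (Finset.mem_univ z)) (G.deg_nonneg z)
      _ = G.mass * H := by rw [← Finset.sum_mul, mass]
  have hsq : H ^ 2 ≤ G.resDiam * (G.mass * H) :=
    (G.sq_le_res_mul_dirichlet (z := z₀) (if_pos rfl)).trans
      (mul_le_mul (G.res_le_resDiam x z₀) hdir (G.dirichlet_nonneg _) G.resDiam_pos.le)
  have hHle : H ≤ G.mass * G.resDiam := by nlinarith [G.one_le_mass_mul_resDiam]
  exact (hmax z (Finset.mem_univ z)).trans hHle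

lemma succ_mul_avoidProb_le (n : ℕ) {z : V} (hz : z ≠ x) :
    (n + 1) * G.avoidProb x n z ≤ G.mass * G.resDiam := by
  refine le_trans ?_ (truncHittingTime_le (x := x) (n + 1) z)
  rw [truncHittingTime, if_neg hz]
  calc (n + 1) * G.avoidProb x n z = ∑ _k ∈ Finset.range (n + 1), G.avoidProb x n z := by simp
    _ ≤ ∑ k ∈ Finset.range (n + 1), G.avoidProb x k z :=
      Finset.sum_le_sum fun k hk =>
        avoidProb_antitone z (Nat.lt_succ_iff.mp (Finset.mem_range.mp hk))

end Green

section Walk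

variable {G}

/-- `q` encodes the path `z, q 0, …, q (n - 1)`, weighted by the walk killed on entering `x`. -/
lemma sum_prod_killed_transProb_eq_avoidProb (x : V) (n : ℕ) (z : V) :
    ∑ q : Fin n → V, ∏ i : Fin n,
        (if q i = x then 0 else G.transProb ((Fin.cons z q : Fin (n + 1) → V) i.castSucc) (q i)) =
      G.avoidProb x n z := by
  induction n generalizing z with
  | zero => simp
  | succ n ih =>
    rw [← (Fin.consEquiv fun _ => V).sum_comp, Fintype.sum_prod_type]
    calc _ = ∑ w, (if w = x then 0 else G.transProb z w) * G.avoidProb x n w := by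
          refine Finset.sum_congr rfl fun w _ => ?_
          simp only [Fin.consEquiv_apply, Fin.prod_univ_succ, Fin.cons_zero, Fin.cons_succ,
            Fin.castSucc_zero, ← Fin.succ_castSucc]
          rw [← Finset.mul_sum, ih]
      _ = G.avoidProb x (n + 1) z := by
          simp [avoidProb_succ, ite_mul, Finset.sum_ite, Finset.filter_ne']

lemma sum_cylinder_weight_eq_avoidProb (x z : V) (N : ℕ) :
    ∑ q : Fin (N + 1) → V with ∀ i : Fin N, q i.succ ≠ x,
        (if q 0 = z then 1 else 0) * ∏ i : Fin N, G.transProb (q i.castSucc) (q i.succ) =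
      G.avoidProb x N z := by
  rw [Finset.sum_filter, ← sum_prod_killed_transProb_eq_avoidProb,
    ← (Fin.consEquiv fun _ => V).sum_comp, Fintype.sum_prod_type]
  simp only [Fin.consEquiv_apply, Fin.cons_zero, Fin.cons_succ, ite_mul, one_mul, zero_mul]
  rw [Finset.sum_comm]
  refine Finset.sum_congr rfl fun rest _ => ?_
  simp only [Finset.sum_ite_irrel, Finset.sum_ite_eq', Finset.mem_univ, if_true,
    Finset.sum_const_zero]
  split_ifs with havoid
  · exact Finset.prod_congr rfl fun i _ => (if_neg (havoid i)).symm
  · obtain ⟨i, hi⟩ := _root_.not_forall_not.mp havoid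
    exact Eq.symm <| Finset.prod_eq_zero (Finset.mem_univ i) (if_pos hi)

variable [MeasurableSpace V] {z : V} {P : Measure (ℕ → V)}

lemma IsWalkLaw.measure_cylinder (hP : G.IsWalkLaw z P) {N : ℕ} (q : Fin (N + 1) → V) :
    P {ω | ∀ i : Fin (N + 1), ω i = q i} = ENNReal.ofReal
      ((if q 0 = z then 1 else 0) * ∏ i : Fin N, G.transProb (q i.castSucc) (q i.succ)) := by
  have hclamp : ∀ i : Fin (N + 1), Fin.clamp i N = i :=
    fun i => Fin.ext (by simp [Fin.clamp]; omega)
  have hset : {ω : ℕ → V | ∀ i : Fin (N + 1), ω i = q i} =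
      {ω | ∀ k ≤ N, ω k = q (Fin.clamp k N)} := by
    ext ω
    refine ⟨fun h k hk => ?_, fun h i => ?_⟩
    · simpa [Fin.clamp, Nat.min_eq_left hk] using h ⟨k, by omega⟩
    · simpa [hclamp] using h i (Nat.lt_succ_iff.mp i.isLt)
  have hsucc : ∀ i : Fin N, Fin.clamp i N = i.castSucc ∧ Fin.clamp (i + 1) N = i.succ :=
    fun i => ⟨Fin.ext (by simp [Fin.clamp]), Fin.ext (by simp [Fin.clamp])⟩
  rw [hset, hP.2 N, ← Fin.prod_univ_eq_prod_range, ENNReal.ofReal_mul (by positivity),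
    ENNReal.ofReal_prod_of_nonneg fun i _ => transProb_nonneg _ _]
  have h0 : Fin.clamp 0 N = 0 := hclamp 0
  simp [hsucc, h0, transProb, apply_ite ENNReal.ofReal]

lemma IsWalkLaw.measure_avoid_le (hP : G.IsWalkLaw z P) (x : V) (N : ℕ) :
    P {ω | ∀ n, 0 < n → n ≤ N → ω n ≠ x} ≤ ENNReal.ofReal (G.avoidProb x N z) := by
  set S := Finset.univ.filter fun q : Fin (N + 1) → V => ∀ i : Fin N, q i.succ ≠ x
  have hcover : {ω : ℕ → V | ∀ n, 0 < n → n ≤ N → ω n ≠ x} ⊆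
      ⋃ q ∈ S, {ω | ∀ i : Fin (N + 1), ω i = q i} := fun ω hω =>
    Set.mem_iUnion₂.mpr ⟨fun i => ω i, Finset.mem_filter.mpr ⟨Finset.mem_univ _,
      fun i => hω i.succ (by simp) (by simp [Nat.succ_le_of_lt i.isLt])⟩, fun i => rfl⟩
  calc P _ ≤ ∑ q ∈ S, P {ω | ∀ i : Fin (N + 1), ω i = q i} :=
        (measure_mono hcover).trans (measure_biUnion_finset_le _ _)
    _ = ∑ q ∈ S, ENNReal.ofReal ((if q 0 = z then 1 else 0) *
          ∏ i : Fin N, G.transProb (q i.castSucc) (q i.succ)) :=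
        Finset.sum_congr rfl fun q _ => hP.measure_cylinder q
    _ = ENNReal.ofReal (G.avoidProb x N z) := by
        rw [← sum_cylinder_weight_eq_avoidProb, ENNReal.ofReal_sum_of_nonneg fun q _ =>
          mul_nonneg (by split_ifs <;> norm_num)
            (Finset.prod_nonneg fun i _ => transProb_nonneg _ _)]

end Walk

lemma deg_mul_resDiam_mul_avoidProb_le [Nontrivial V] (x : V) {j : ℕ} (hj : j ≠ 0) :
    G.deg x * G.resDiam * G.avoidProb x (j * ⌈2 * (G.mass * G.resDiam)⌉₊) x ≤ (1 / 2) ^ j := by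
  set M := G.mass * G.resDiam
  set b := ⌈2 * M⌉₊
  have hM : 1 ≤ M := G.one_le_mass_mul_resDiam
  have hb : 2 * M ≤ b := Nat.le_ceil _
  have hb₀ : b ≠ 0 := (Nat.ceil_pos.mpr (by linarith)).ne'
  have hhalf : ∀ w ≠ x, G.avoidProb x b w ≤ 1 / 2 := fun w hw => by
    nlinarith [succ_mul_avoidProb_le (G := G) b hw, avoidProb_nonneg (G := G) (x := x) b w]
  have hstart : G.deg x * G.resDiam * G.avoidProb x b x ≤ 1 / 2 := by
    have hkac := mul_le_mul_of_nonneg_right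
      (nat_mul_deg_mul_avoidProb_le_mass (G := G) (x := x) b) G.resDiam_pos.le
    have hnonneg : 0 ≤ G.deg x * G.resDiam * G.avoidProb x b x :=
      mul_nonneg (mul_nonneg (G.deg_nonneg x) G.resDiam_pos.le) (avoidProb_nonneg b x)
    nlinarith
  obtain ⟨k, rfl⟩ := Nat.exists_eq_succ_of_ne_zero hj
  calc G.deg x * G.resDiam * G.avoidProb x ((k + 1) * b) x
      = G.deg x * G.resDiam * G.avoidProb x (b + k * b) x := by ring_nf
    _ ≤ G.deg x * G.resDiam * ((1 / 2) ^ k * G.avoidProb x b x) :=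
      mul_le_mul_of_nonneg_left (avoidProb_add_mul_le hb₀ (by norm_num) hhalf k x)
        (mul_nonneg (G.deg_nonneg x) G.resDiam_pos.le)
    _ = (1 / 2) ^ k * (G.deg x * G.resDiam * G.avoidProb x b x) := by ring
    _ ≤ (1 / 2) ^ k * (1 / 2) := by gcongr
    _ = (1 / 2) ^ (k + 1) := by ring

end FinWeightedGraph

lemma half_pow_floor_le (t : ℝ) : (1 / 2 : ℝ) ^ ⌊t⌋₊ ≤ 2 * Real.exp (-(Real.log 2 * t)) := by
  have hlog : 0 < Real.log 2 := Real.log_pos one_lt_two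
  have hfloor : t < ⌊t⌋₊ + 1 := Nat.lt_floor_add_one t
  calc (1 / 2 : ℝ) ^ ⌊t⌋₊ = Real.exp (-(⌊t⌋₊ * Real.log 2)) := by
        rw [Real.exp_neg, Real.exp_nat_mul, Real.exp_log two_pos, one_div, inv_pow]
    _ ≤ Real.exp (Real.log 2 - Real.log 2 * t) := Real.exp_le_exp.mpr (by nlinarith)
    _ = 2 * Real.exp (-(Real.log 2 * t)) := by
        rw [sub_eq_add_neg, Real.exp_add, Real.exp_log two_pos]

lemma nat_floor_div_three_mul_ceil_two_mul_lt {lam M : ℝ} (hlam : 3 ≤ lam) (hM : 1 ≤ M) :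
    (⌊lam / 3⌋₊ * ⌈2 * M⌉₊ : ℕ) < lam * M := by
  have hj : (1 : ℝ) ≤ ⌊lam / 3⌋₊ := Nat.one_le_cast.mpr (Nat.floor_pos.mpr (by linarith))
  have hj' : (⌊lam / 3⌋₊ : ℝ) ≤ lam / 3 := Nat.floor_le (by linarith)
  have hb : (⌈2 * M⌉₊ : ℝ) < 2 * M + 1 := Nat.ceil_lt_add_one (by linarith)
  push_cast
  nlinarith

/-- Lemma 2.1: universal exponential tail bound for the first return time
`τ⁺_x = inf{t ≥ 1 : X_t = x}`. The event below is `{τ⁺_x ≥ λ·m(G)·r(G)}`. -/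
theorem return_time_tail_bound :
    ∃ c1 c2 : ℝ, 0 < c1 ∧ 0 < c2 ∧
      ∀ (V : Type) [Fintype V] [MeasurableSpace V] [Nontrivial V]
        (G : FinWeightedGraph V) (x : V)
        (P : Measure (ℕ → V)), G.IsWalkLaw x P →
        ∀ lam : ℝ, 4 ≤ lam →
        G.deg x * G.resDiam *
            (P {ω | ∀ n : ℕ, 0 < n → (n : ℝ) < lam * G.mass * G.resDiam → ω n ≠ x}).toReal
          ≤ c1 * Real.exp (-(c2 * lam)) := by
  refine ⟨2, Real.log 2 / 3, two_pos, by positivity, ?_⟩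
  intro V _ _ _ G x P hP lam hlam
  set N := ⌊lam / 3⌋₊ * ⌈2 * (G.mass * G.resDiam)⌉₊
  have hN : (N : ℝ) < lam * G.mass * G.resDiam := by
    rw [mul_assoc]
    exact nat_floor_div_three_mul_ceil_two_mul_lt (by linarith) G.one_le_mass_mul_resDiam
  have hevent : {ω : ℕ → V | ∀ n : ℕ, 0 < n → (n : ℝ) < lam * G.mass * G.resDiam → ω n ≠ x} ⊆
      {ω | ∀ n, 0 < n → n ≤ N → ω n ≠ x} := fun ω hω n hn hnN =>
    hω n hn ((Nat.cast_le.mpr hnN).trans_lt hN)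
  have hprob := ENNReal.toReal_le_of_le_ofReal (G.avoidProb_nonneg N x)
    ((measure_mono hevent).trans (hP.measure_avoid_le x N))
  calc _ ≤ G.deg x * G.resDiam * G.avoidProb x N x :=
        mul_le_mul_of_nonneg_left hprob (mul_nonneg (G.deg_nonneg x) G.resDiam_pos.le)
    _ ≤ (1 / 2) ^ ⌊lam / 3⌋₊ :=
        G.deg_mul_resDiam_mul_avoidProb_le x (Nat.floor_pos.mpr (by linarith)).ne'
    _ ≤ 2 * Real.exp (-(Real.log 2 * (lam / 3))) := half_pow_floor_le _
    _ = 2 * Real.exp (-(Real.log 2 / 3 * lam)) := by ring_nf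
end

section
/- Let G be a finite connected unweighted graph (μ^G_{xy}=1 for every edge {x,y}∈E(G)) with at least two vertices. Then μ^G(B_G(x,r)) ≥ r for every x∈V(G) and every r∈[r₀(G),r(G)], where B_G(x,r) is the open ball of radius r in the resistance metric. Consequently, any collection (G_i)_{i∈I} of finite connected unweighted graphs for which there exists a finite constant c with m(G_i)≤c·r(G_i) for all i∈I satisfies UVD with v(r)=r. -/
open MeasureTheory Classical

/-- A collection of finite connected weighted graphs satisfies uniform volume growth with
volume doubling (UVD) with respect to a given non-decreasing doubling function `v`. -/
def UVDWith {I : Type} {V : I → Type} [∀ i, Fintype (V i)]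
    (G : ∀ i, FinWeightedGraph (V i)) (v : ℝ → ℝ) : Prop :=
  ∃ c1 c2 c3 : ℝ, 0 < c1 ∧ 0 < c2 ∧ 0 < c3 ∧
    (∀ r : ℝ, 0 ≤ r → 0 ≤ v r) ∧
    (∀ r s : ℝ, 0 ≤ r → r ≤ s → v r ≤ v s) ∧
    (∀ r : ℝ, 0 ≤ r → v (2 * r) ≤ c3 * v r) ∧
    (∀ (i : I) (x : V i) (r : ℝ), (G i).minRes ≤ r → r ≤ (G i).resDiam →
      c1 * v r ≤ (G i).vol ((G i).resBall x r)) ∧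
    (∀ i : I, (G i).mass ≤ c2 * v ((G i).resDiam))

/-- Uniform volume growth with volume doubling (UVD). -/
def UVD {I : Type} {V : I → Type} [∀ i, Fintype (V i)]
    (G : ∀ i, FinWeightedGraph (V i)) : Prop :=
  ∃ v : ℝ → ℝ, UVDWith G v

/-!
On an unweighted graph, Cauchy–Schwarz along a path of length `n` from `x` to `y` shows that a
unit potential drop costs Dirichlet energy at least `1 / n`, so `R(x, y)` is at most the length of
any path. Hence if some vertex `y` has `R(x, y) ≥ r`, a path from `x` to `y` has length at least
`r` and its first `⌈r⌉` vertices lie in `B(x, r)`; otherwise the ball is all of `V` and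
`r ≤ r(G) ≤ |V|`. Every vertex has weight at least `1`, so in both cases `μ(B(x, r)) ≥ r`.
-/

open Finset

theorem two_mul_sum_le_sum_of_disjoint_swap {α : Type*} [Fintype α] [DecidableEq α]
    {F : α × α → ℝ} (hF : ∀ q, 0 ≤ F q) (hF_swap : ∀ q, F q.swap = F q)
    {s : Finset (α × α)} (hs : Disjoint s (s.image Prod.swap)) :
    2 * ∑ q ∈ s, F q ≤ ∑ q, F q := by
  have h_swap : ∑ q ∈ s.image Prod.swap, F q = ∑ q ∈ s, F q := by
    rw [sum_image Prod.swap_injective.injOn]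
    exact sum_congr rfl fun q _ => hF_swap q
  calc 2 * ∑ q ∈ s, F q = ∑ q ∈ s ∪ s.image Prod.swap, F q := by
        rw [sum_union hs, h_swap, two_mul]
    _ ≤ ∑ q, F q := sum_le_univ_sum_of_nonneg hF

namespace FinWeightedGraph

variable {V : Type} [Fintype V] (G : FinWeightedGraph V)

def toSimpleGraph : SimpleGraph V where
  Adj a b := 0 < G.w a b
  symm := ⟨fun a b h => by rwa [G.symm]⟩
  loopless := ⟨fun a h => by simp [G.loopless] at h⟩

def IsUnweighted : Prop := ∀ x y, 0 < G.w x y → G.w x y = 1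

theorem toSimpleGraph_reachable (x y : V) : G.toSimpleGraph.Reachable x y :=
  (SimpleGraph.reachable_iff_reflTransGen x y).2 (G.connected x y)

@[simp]
theorem res_self (x : V) : G.res x x = 0 := by simp [res]

theorem dirichlet_eq_sum_prod (f : V → ℝ) :
    G.dirichlet f = (1 / 2) * ∑ q : V × V, G.w q.1 q.2 * (f q.1 - f q.2) ^ 2 := by
  rw [dirichlet, Fintype.sum_prod_type]

theorem sum_path_le_dirichlet {u v : V} {p : G.toSimpleGraph.Walk u v} (hp : p.IsPath)
    (f : V → ℝ) :
    ∑ j ∈ range p.length,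
        G.w (p.getVert j) (p.getVert (j + 1)) * (f (p.getVert j) - f (p.getVert (j + 1))) ^ 2
      ≤ G.dirichlet f := by
  set e : ℕ → V × V := fun j => (p.getVert j, p.getVert (j + 1))
  have h_inj : ∀ {a b}, a ≤ p.length → b ≤ p.length → p.getVert a = p.getVert b → a = b :=
    fun ha hb hab => hp.getVert_injOn ha hb hab
  have he_inj : Set.InjOn e (range p.length) := by
    intro a ha b hb hab
    simp only [coe_range, Set.mem_Iio] at ha hb
    exact h_inj ha.le hb.le (congrArg Prod.fst hab)
  have h_disj :
      Disjoint ((range p.length).image e) (((range p.length).image e).image Prod.swap) := by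
    simp only [disjoint_left, mem_image, mem_range]
    rintro _ ⟨a, ha, rfl⟩ ⟨_, ⟨b, hb, rfl⟩, hba⟩
    simp only [e, Prod.swap_prod_mk, Prod.mk.injEq] at hba
    have := h_inj hb ha.le hba.1
    have := h_inj hb.le ha hba.2
    omega
  have h_two := two_mul_sum_le_sum_of_disjoint_swap
    (F := fun q => G.w q.1 q.2 * (f q.1 - f q.2) ^ 2)
    (fun q => mul_nonneg (G.nonneg _ _) (sq_nonneg _))
    (fun q => by simp only [Prod.fst_swap, Prod.snd_swap, G.symm q.2, sub_sq_comm]) h_disj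
  rw [sum_image he_inj] at h_two
  rw [dirichlet_eq_sum_prod]
  linarith

theorem inv_length_le_dirichlet (hG : G.IsUnweighted) {u v : V} {p : G.toSimpleGraph.Walk u v}
    (hp : p.IsPath) {f : V → ℝ} (hu : f u = 0) (hv : f v = 1) :
    (p.length : ℝ)⁻¹ ≤ G.dirichlet f := by
  set d : ℕ → ℝ := fun j => f (p.getVert (j + 1)) - f (p.getVert j)
  have h_tel : ∑ j ∈ range p.length, d j = 1 := by
    simp only [d, sum_range_sub (fun j => f (p.getVert j)), p.getVert_length, p.getVert_zero, hu,
      hv, sub_zero]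
  have h_cs : 1 ≤ p.length * ∑ j ∈ range p.length, d j ^ 2 := by
    simpa [h_tel] using sq_sum_le_card_mul_sum_sq (s := range p.length) (f := d)
  have h_path : ∑ j ∈ range p.length, d j ^ 2 ≤ G.dirichlet f := by
    refine le_of_eq_of_le (sum_congr rfl fun j hj => ?_) (G.sum_path_le_dirichlet hp f)
    rw [hG _ _ (p.adj_getVert_succ (mem_range.1 hj)), one_mul, sub_sq_comm]
  rcases Nat.eq_zero_or_pos p.length with h0 | hpos
  · norm_num [h0] at h_cs
  · rw [inv_le_iff_one_le_mul₀ (by exact_mod_cast hpos), mul_comm]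
    exact h_cs.trans (by gcongr)

theorem res_le_inv_of_le_dirichlet {x y : V} {c : ℝ} (hc : 0 < c)
    (h : ∀ f : V → ℝ, f x = 0 → f y = 1 → c ≤ G.dirichlet f) : G.res x y ≤ c⁻¹ := by
  rw [res]
  split_ifs with hxy
  · positivity
  · have h_ne : {e | ∃ f : V → ℝ, f x = 0 ∧ f y = 1 ∧ G.dirichlet f = e}.Nonempty :=
      ⟨_, fun z => if z = y then 1 else 0, by simp [hxy], by simp, rfl⟩
    exact inv_anti₀ hc (le_csInf h_ne (by rintro _ ⟨f, hfx, hfy, rfl⟩; exact h f hfx hfy))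

variable {G}

theorem res_le_length (hG : G.IsUnweighted) {u v : V} (p : G.toSimpleGraph.Walk u v) :
    G.res u v ≤ p.length := by
  obtain rfl | huv := eq_or_ne u v
  · simp
  have hpos : 0 < p.bypass.length :=
    Nat.pos_of_ne_zero fun h => huv (SimpleGraph.Walk.eq_of_length_eq_zero h)
  calc G.res u v ≤ ((p.bypass.length : ℝ)⁻¹)⁻¹ :=
        G.res_le_inv_of_le_dirichlet (by positivity)
          fun f hu hv => G.inv_length_le_dirichlet hG p.bypass_isPath hu hv
    _ ≤ p.length := by
        rw [inv_inv]; exact_mod_cast p.length_bypass_le_length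

theorem res_getVert_le (hG : G.IsUnweighted) {u v : V} (p : G.toSimpleGraph.Walk u v) (j : ℕ) :
    G.res u (p.getVert j) ≤ j :=
  (res_le_length hG (p.take j)).trans (by simp)

theorem resDiam_nonneg [Nonempty V] : 0 ≤ G.resDiam := by
  inhabit V
  calc (0 : ℝ) = G.res default default := (G.res_self _).symm
    _ ≤ ⨆ y, G.res default y := le_ciSup (Set.finite_range _).bddAbove _
    _ ≤ G.resDiam := le_ciSup (f := fun x => ⨆ y, G.res x y) (Set.finite_range _).bddAbove _

theorem resDiam_le_card [Nonempty V] (hG : G.IsUnweighted) : G.resDiam ≤ Fintype.card V := by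
  refine ciSup_le fun x => ciSup_le fun y => ?_
  obtain ⟨p, hp⟩ := (G.toSimpleGraph_reachable x y).exists_isPath
  exact (res_le_length hG p).trans (by exact_mod_cast hp.length_lt.le)

theorem one_le_deg [Nontrivial V] (hG : G.IsUnweighted) (x : V) : 1 ≤ G.deg x := by
  obtain ⟨y, hy⟩ := exists_ne x
  obtain h | ⟨z, hxz, -⟩ := (G.connected x y).cases_head
  · exact absurd h.symm hy
  · calc 1 = G.w x z := (hG x z hxz).symm
      _ ≤ G.deg x := single_le_sum (fun t _ => G.nonneg x t) (mem_univ z)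

theorem card_le_vol [Nontrivial V] (hG : G.IsUnweighted) {s : Finset V} {A : Set V}
    (hsA : ↑s ⊆ A) : (#s : ℝ) ≤ G.vol A := by
  calc (#s : ℝ) = ∑ x ∈ s, 1 := by simp
    _ ≤ ∑ x ∈ s, A.indicator G.deg x :=
        sum_le_sum fun x hx => by rw [Set.indicator_of_mem (hsA hx)]; exact one_le_deg hG x
    _ ≤ G.vol A := sum_le_univ_sum_of_nonneg fun x =>
        Set.indicator_nonneg (fun y _ => sum_nonneg fun z _ => G.nonneg y z) x

theorem exists_finset_subset_resBall [Nonempty V] (hG : G.IsUnweighted) (x : V) {r : ℝ}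
    (hr : r ≤ G.resDiam) : ∃ s : Finset V, ↑s ⊆ G.resBall x r ∧ r ≤ #s := by
  by_cases h_out : ∃ y, r ≤ G.res x y
  · obtain ⟨y, hy⟩ := h_out
    obtain ⟨p, hp⟩ := (G.toSimpleGraph_reachable x y).exists_isPath
    have hk : ⌈r⌉₊ ≤ p.length := Nat.ceil_le.2 (hy.trans (res_le_length hG p))
    refine ⟨(range ⌈r⌉₊).image p.getVert, ?_, ?_⟩
    · simp only [coe_image, coe_range, Set.image_subset_iff]
      exact fun j hj => (res_getVert_le hG p j).trans_lt (Nat.lt_ceil.1 hj)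
    · rw [card_image_of_injOn, card_range]
      · exact Nat.le_ceil r
      · intro a ha b hb hab
        simp only [coe_range, Set.mem_Iio] at ha hb
        exact hp.getVert_injOn (ha.le.trans hk) (hb.le.trans hk) hab
  · push Not at h_out
    exact ⟨univ, fun y _ => h_out y, by simpa using hr.trans (resDiam_le_card hG)⟩

theorem le_vol_resBall [Nontrivial V] (hG : G.IsUnweighted) (x : V) {r : ℝ}
    (hr : r ≤ G.resDiam) : r ≤ G.vol (G.resBall x r) := by
  obtain ⟨s, hs, hrs⟩ := exists_finset_subset_resBall hG x hr
  exact hrs.trans (card_le_vol hG hs)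

end FinWeightedGraph

/-- Section 5.1: for unweighted graphs, resistance balls of radius `r ∈ [r₀(G), r(G)]` have
measure at least `r`; consequently, any collection of unweighted graphs with
`m(G_i) ≤ c·r(G_i)` satisfies UVD with `v(r) = r`. -/
theorem one_dimensional_graphs_UVD :
    (∀ (V : Type) [Fintype V] [Nontrivial V] (G : FinWeightedGraph V),
      (∀ x y : V, 0 < G.w x y → G.w x y = 1) →
      ∀ (x : V) (r : ℝ), G.minRes ≤ r → r ≤ G.resDiam →
        r ≤ G.vol (G.resBall x r)) ∧
    (∀ (I : Type) (V : I → Type) [∀ i, Fintype (V i)] [∀ i, Nontrivial (V i)]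
      (G : ∀ i, FinWeightedGraph (V i)),
      (∀ (i : I) (x y : V i), 0 < (G i).w x y → (G i).w x y = 1) →
      (∃ c : ℝ, ∀ i : I, (G i).mass ≤ c * (G i).resDiam) →
      UVDWith G (fun r => r)) := by
  refine ⟨fun V _ _ G hG x r _ hr => G.le_vol_resBall hG x hr, ?_⟩
  rintro I V _ _ G hG ⟨c, hc⟩
  refine ⟨1, max c 1, 2, one_pos, lt_max_of_lt_right one_pos, two_pos, fun _ hr => hr,
    fun _ _ _ hrs => hrs, fun _ _ => le_rfl, fun i x r _ hr => ?_, fun i => ?_⟩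
  · rw [one_mul]
    exact (G i).le_vol_resBall (hG i) x hr
  · exact (hc i).trans (mul_le_mul_of_nonneg_right (le_max_left c 1) (G i).resDiam_nonneg)
end
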